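/- Let m ≥ 1 be an integer, define G(x) = ∫₀^x m |sin s| ds, and let u : (0,∞) → ℝ be locally absolutely continuous. Then for all 0 < r₁ < r₂ < ∞, |G(u(r₂)) − G(u(r₁))| ≤ (1/2) ∫_{r₁}^{r₂} (u'(r)² + m² sin²(u(r))/r²) r dr. -/

import Mathlib

/-!
Both `u` and `G ∘ u` are absolutely continuous on `[r₁, r₂]` (`G` is `m`-Lipschitz), so the
fundamental theorem of calculus and the a.e. chain rule give
`G(u(r₂)) − G(u(r₁)) = ∫ m |sin u| u'`. Pointwise,
`m |sin u| |u'| ≤ (u'² r + m² sin² u / r) / 2` by AM–GM, with weights chosen so that the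
right-hand side is the energy density.
-/

open MeasureTheory Filter Set
open scoped ENNReal

/-- Local absolute continuity on `(0,∞)`: the fundamental theorem of calculus holds
on every compact subinterval. -/
def LocAC (u : ℝ → ℝ) : Prop :=
  ∀ a b : ℝ, 0 < a → a ≤ b →
    IntervalIntegrable (deriv u) volume a b ∧ u b - u a = ∫ r in a..b, deriv u r

/-- The partial-energy functional `G(x) = ∫₀^x m |sin s| ds`. -/
noncomputable def Gfun (m : ℕ) (x : ℝ) : ℝ := ∫ s in (0:ℝ)..x, (m:ℝ) * |Real.sin s|

open scoped NNReal

namespace AbsolutelyContinuousOnInterval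

variable {X Y : Type*} [PseudoMetricSpace X] [PseudoMetricSpace Y] {f g : ℝ → X} {a b : ℝ}

theorem congr (hf : AbsolutelyContinuousOnInterval f a b) (hfg : EqOn f g (uIcc a b)) :
    AbsolutelyContinuousOnInterval g a b := by
  refine hf.congr' (eventually_inf_principal.mpr (Eventually.of_forall fun E hE => ?_))
  refine Finset.sum_congr rfl fun i hi => ?_
  rw [hfg (hE.1 i hi).1, hfg (hE.1 i hi).2]

theorem _root_.LipschitzWith.comp_absolutelyContinuousOnInterval {K : ℝ≥0} {φ : X → Y}
    (hφ : LipschitzWith K φ) (hf : AbsolutelyContinuousOnInterval f a b) :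
    AbsolutelyContinuousOnInterval (φ ∘ f) a b := by
  have hK : Tendsto (fun E : ℕ × (ℕ → ℝ × ℝ) =>
      K * ∑ i ∈ Finset.range E.1, dist (f (E.2 i).1) (f (E.2 i).2))
      (totalLengthFilter ⊓ 𝓟 (disjWithin a b)) (nhds 0) := by
    simpa using Filter.Tendsto.const_mul (K : ℝ) hf
  refine squeeze_zero (fun E => Finset.sum_nonneg fun _ _ => dist_nonneg) (fun E => ?_) hK
  rw [Finset.mul_sum]
  exact Finset.sum_le_sum fun i _ => hφ.dist_le_mul _ _

end AbsolutelyContinuousOnInterval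

theorem LocAC.absolutelyContinuousOnInterval {u : ℝ → ℝ} (hu : LocAC u) {a b : ℝ}
    (ha : 0 < a) (hab : a ≤ b) : AbsolutelyContinuousOnInterval u a b := by
  have hint : AbsolutelyContinuousOnInterval (fun t => ∫ r in a..t, deriv u r) a b :=
    (hu a b ha hab).1.absolutelyContinuousOnInterval_intervalIntegral left_mem_uIcc
  have hconst : AbsolutelyContinuousOnInterval (fun _ => u a) a b :=
    (LipschitzWith.const (u a)).lipschitzOnWith.absolutelyContinuousOnInterval
  refine (hint.add hconst).congr fun t ht => ?_
  rw [uIcc_of_le hab] at ht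
  have := (hu a t ha ht.1).2
  simp only [Pi.add_apply]
  linarith

theorem AbsolutelyContinuousOnInterval.enorm_comp_sub_le_lintegral {F f u : ℝ → ℝ}
    {K : ℝ≥0} {a b : ℝ} (hF : ∀ y, HasDerivAt F (f y) y) (hFK : LipschitzWith K F)
    (hu : AbsolutelyContinuousOnInterval u a b) (hab : a ≤ b) :
    ‖F (u b) - F (u a)‖ₑ ≤ ∫⁻ x in Ioc a b, ‖f (u x) * deriv u x‖ₑ := by
  have hFTC := (hFK.comp_absolutelyContinuousOnInterval hu).integral_deriv_eq_sub
  simp only [Function.comp_apply] at hFTC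
  rw [← hFTC, intervalIntegral.integral_of_le hab]
  refine (enorm_integral_le_lintegral_enorm _).trans (lintegral_mono_ae ?_)
  rw [ae_restrict_iff' measurableSet_Ioc]
  filter_upwards [hu.ae_differentiableAt] with x hdiff hx
  have hxI : x ∈ uIcc a b := by rw [uIcc_of_le hab]; exact Ioc_subset_Icc_self hx
  rw [((hF (u x)).comp x (hdiff hxI).hasDerivAt).deriv]

theorem abs_mul_le_half_mul_sq_add_sq_div_sq (p q : ℝ) {r : ℝ} (hr : 0 < r) :
    |p * q| ≤ 1 / 2 * ((p ^ 2 + q ^ 2 / r ^ 2) * r) := by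
  have hsq : 0 ≤ (|p| * r - |q|) ^ 2 := sq_nonneg _
  have hexp : 1 / 2 * ((p ^ 2 + q ^ 2 / r ^ 2) * r) = (|p| ^ 2 * r ^ 2 + |q| ^ 2) / (2 * r) := by
    rw [sq_abs, sq_abs]
    field_simp
  rw [hexp, le_div_iff₀ (by positivity), abs_mul]
  nlinarith

theorem hasDerivAt_Gfun (m : ℕ) (x : ℝ) : HasDerivAt (Gfun m) (m * |Real.sin x|) x :=
  (by fun_prop : Continuous fun s => (m : ℝ) * |Real.sin s|).integral_hasStrictDerivAt 0 x
    |>.hasDerivAt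

theorem lipschitzWith_Gfun (m : ℕ) : LipschitzWith m (Gfun m) := by
  refine lipschitzWith_of_nnnorm_deriv_le (fun x => (hasDerivAt_Gfun m x).differentiableAt)
    fun x => ?_
  rw [(hasDerivAt_Gfun m x).deriv, ← NNReal.coe_le_coe, coe_nnnorm, Real.norm_eq_abs, abs_mul,
    abs_abs, Nat.abs_cast, NNReal.coe_natCast]
  exact mul_le_of_le_one_right (Nat.cast_nonneg m) (Real.abs_sin_le_one x)

theorem G_localized_energy_bound_general
    (m : ℕ) (u : ℝ → ℝ) (hAC : LocAC u)
    (r₁ r₂ : ℝ) (h₁ : 0 < r₁) (h₂ : r₁ < r₂) :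
    ENNReal.ofReal |Gfun m (u r₂) - Gfun m (u r₁)| ≤
      (1/2 : ℝ≥0∞) * ∫⁻ r in Set.Ioc r₁ r₂,
        ENNReal.ofReal ((deriv u r ^ 2 + (m:ℝ)^2 * Real.sin (u r) ^ 2 / r ^ 2) * r) := by
  have hu := hAC.absolutelyContinuousOnInterval h₁ h₂.le
  rw [← Real.enorm_eq_ofReal_abs, ← lintegral_const_mul' _ _ (by norm_num)]
  refine (hu.enorm_comp_sub_le_lintegral (hasDerivAt_Gfun m) (lipschitzWith_Gfun m) h₂.le).trans
    (setLIntegral_mono' measurableSet_Ioc fun r hr => ?_)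
  have hhalf : (1 / 2 : ℝ≥0∞) = ENNReal.ofReal (1 / 2) := by
    rw [ENNReal.ofReal_div_of_pos two_pos]; simp
  rw [Real.enorm_eq_ofReal_abs, hhalf, ← ENNReal.ofReal_mul (by norm_num)]
  refine ENNReal.ofReal_le_ofReal ?_
  calc |m * |Real.sin (u r)| * deriv u r| = |deriv u r * (m * Real.sin (u r))| := by
        simp only [abs_mul, abs_abs, Nat.abs_cast]; ring
    _ ≤ _ := abs_mul_le_half_mul_sq_add_sq_div_sq _ _ (h₁.trans hr.1)
    _ = _ := by ring

/-- The localized energy bound `|G(u(r₂)) − G(u(r₁))| ≤ E^{r₂}_{r₁}(u)`, the localized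
energy being interpreted in the extended-real sense. -/
theorem G_localized_energy_bound
    (m : ℕ) (hm : 1 ≤ m) (u : ℝ → ℝ) (hAC : LocAC u)
    (r₁ r₂ : ℝ) (h₁ : 0 < r₁) (h₂ : r₁ < r₂) :
    ENNReal.ofReal |Gfun m (u r₂) - Gfun m (u r₁)| ≤
      (1/2 : ℝ≥0∞) * ∫⁻ r in Set.Ioc r₁ r₂,
        ENNReal.ofReal ((deriv u r ^ 2 + (m:ℝ)^2 * Real.sin (u r) ^ 2 / r ^ 2) * r) :=
  G_localized_energy_bound_general m u hAC r₁ r₂ h₁ h₂
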